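/- For every integer m ≥ 1 and nonnegative real weights β_1,…,β_m and α_0,…,α_m with Σ_{j=1}^m β_j + Σ_{i=0}^m α_i = 1, there exists a binary tree with m internal nodes whose search cost (with the β's attached to the internal nodes in symmetric order and the α's attached to the leaves in left-to-right order) satisfies C ≤ H(α_0, β_1, α_1, …, β_m, α_m) + 2. -/

import Mathlib

/-- A (full) binary tree: every internal node has exactly two children. -/
inductive BTree where
  | leaf : BTree
  | node : BTree → BTree → BTree

namespace BTree

/-- Depths of the leaves, in left-to-right order. -/
def leafDepths : BTree → List ℕ
  | leaf => [0]
  | node l r => l.leafDepths.map (· + 1) ++ r.leafDepths.map (· + 1)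

/-- Depths of the internal nodes, in symmetric (in-)order. -/
def internalDepths : BTree → List ℕ
  | leaf => []
  | node l r => l.internalDepths.map (· + 1) ++ [0] ++ r.internalDepths.map (· + 1)

end BTree

/-!
Lay the weights `α₀, β₁, α₁, …, β_m, α_m` end to end on `[0, 1]` and let `c_u` be the midpoint
of the `u`-th interval. For a contiguous block whose midpoints spread over at most `L`, take as
root the internal node at which the midpoints cross the middle of that spread: the two remaining
blocks then spread over at most `L / 2`. Two neighbours in a block have midpoints at distance at
least half of either weight, so the root weighs at most `2L` and a block reduced to one leaf at
most `4L`. Starting from `L = 1`, an internal node at depth `d'` has `β ≤ 2^(1-d')` and a leaf at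
depth `d` has `α ≤ 2^(2-d)`; that is `d' + 1 ≤ log₂(1/β) + 2` and `d ≤ log₂(1/α) + 2`, and
summing gives `H + 2`.
-/

open Finset

noncomputable def weightMidpoint (w : ℕ → ℝ) (u : ℕ) : ℝ := ∑ v ∈ range u, w v + w u / 2

section Midpoints

variable {w : ℕ → ℝ}

lemma weightMidpoint_succ_sub (u : ℕ) :
    weightMidpoint w (u + 1) - weightMidpoint w u = (w u + w (u + 1)) / 2 := by
  simp only [weightMidpoint, sum_range_succ]
  ring

lemma monotone_weightMidpoint (hw : ∀ u, 0 ≤ w u) : Monotone (weightMidpoint w) :=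
  monotone_nat_of_le_succ fun u => by
    linarith [weightMidpoint_succ_sub (w := w) u, hw u, hw (u + 1)]

lemma weight_le_two_mul_spread (hw : ∀ u, 0 ≤ w u) {lo u hi : ℕ} (hlo : lo ≤ u)
    (hhi : u + 1 ≤ hi) :
    w u ≤ 2 * (weightMidpoint w hi - weightMidpoint w lo) ∧
      w (u + 1) ≤ 2 * (weightMidpoint w hi - weightMidpoint w lo) := by
  have hmono := monotone_weightMidpoint hw
  have := hmono hlo
  have := hmono hhi
  have := weightMidpoint_succ_sub (w := w) u
  constructor <;> linarith [hw u, hw (u + 1)]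

lemma exists_balanced_root (hw : ∀ u, 0 ≤ w u) (lo : ℕ) {n : ℕ} (hn : 0 < n) :
    ∃ k < n,
      2 * (weightMidpoint w (lo + 2 * k) - weightMidpoint w lo)
          ≤ weightMidpoint w (lo + 2 * n) - weightMidpoint w lo ∧
      2 * (weightMidpoint w (lo + 2 * n) - weightMidpoint w (lo + 2 * k + 2))
          ≤ weightMidpoint w (lo + 2 * n) - weightMidpoint w lo := by
  set c := weightMidpoint w
  set P : ℕ → Prop := fun k => 2 * (c (lo + 2 * k) - c lo) ≤ c (lo + 2 * n) - c lo
  have hP0 : P 0 := by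
    simp only [P, mul_zero, add_zero, sub_self]
    linarith [monotone_weightMidpoint hw (Nat.le_add_right lo (2 * n))]
  refine ⟨Nat.findGreatest P (n - 1), by have := Nat.findGreatest_le (P := P) (n - 1); omega,
    Nat.findGreatest_spec (Nat.zero_le _) hP0, ?_⟩
  rcases Nat.lt_or_ge (Nat.findGreatest P (n - 1)) (n - 1) with hk | hk
  · have hnext := Nat.findGreatest_is_greatest (Nat.lt_succ_self _) hk
    simp only [P, not_le] at hnext
    rw [show lo + 2 * (Nat.findGreatest P (n - 1) + 1) = lo + 2 * Nat.findGreatest P (n - 1) + 2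
      by ring] at hnext
    linarith
  · have hlast : lo + 2 * Nat.findGreatest P (n - 1) + 2 = lo + 2 * n := by
      have := Nat.findGreatest_le (P := P) (n - 1); omega
    rw [hlast, sub_self, mul_zero]
    linarith [monotone_weightMidpoint hw (Nat.le_add_right lo (2 * n))]

end Midpoints

namespace BTree

lemma length_leafDepths (T : BTree) : T.leafDepths.length = T.internalDepths.length + 1 := by
  induction T with
  | leaf => rfl
  | node l r ihl ihr => simp only [leafDepths, internalDepths, List.length_append,
      List.length_map, List.length_singleton, ihl, ihr]; omega

/-- The weights `w lo, w (lo + 1), …, w (lo + 2n)` are those of the leaves and internal nodes of `T`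
(`n` internal nodes), interleaved in symmetric order; each internal node weighs at most `2L` and
each leaf at most `4L`, where `L` halves at every level. -/
def FitsWithin (w : ℕ → ℝ) : BTree → ℕ → ℝ → Prop
  | leaf, lo, L => w lo ≤ 4 * L
  | node l r, lo, L =>
      FitsWithin w l lo (L / 2) ∧ w (lo + 2 * l.internalDepths.length + 1) ≤ 2 * L ∧
        FitsWithin w r (lo + 2 * l.internalDepths.length + 2) (L / 2)

theorem FitsWithin.leaf_le {w : ℕ → ℝ} {T : BTree} {lo : ℕ} {L : ℝ}
    (h : T.FitsWithin w lo L) (i : ℕ) (hi : i < T.leafDepths.length) :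
    w (lo + 2 * i) * 2 ^ T.leafDepths[i] ≤ 4 * L := by
  induction T generalizing lo L i with
  | leaf =>
    obtain rfl : i = 0 := by simpa [leafDepths] using hi
    simpa [leafDepths, FitsWithin] using h
  | node l r ihl ihr =>
    obtain ⟨hl, -, hr⟩ := h
    simp only [leafDepths, List.length_append, List.length_map] at hi ⊢
    rw [List.getElem_append]
    split_ifs with hil
    · have := ihl hl i (by simpa using hil)
      simp only [List.getElem_map, pow_succ]
      linarith
    · obtain ⟨k, rfl⟩ := Nat.exists_eq_add_of_le (not_lt.mp hil)
      have := ihr hr k (by simp at hi; omega)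
      simp only [List.length_map, Nat.add_sub_cancel_left, List.getElem_map, pow_succ]
      rw [show lo + 2 * (l.leafDepths.length + k)
        = lo + 2 * l.internalDepths.length + 2 + 2 * k by rw [l.length_leafDepths]; ring]
      linarith

theorem FitsWithin.internal_le {w : ℕ → ℝ} {T : BTree} {lo : ℕ} {L : ℝ}
    (h : T.FitsWithin w lo L) (j : ℕ) (hj : j < T.internalDepths.length) :
    w (lo + 2 * j + 1) * 2 ^ T.internalDepths[j] ≤ 2 * L := by
  induction T generalizing lo L j with
  | leaf => simp [internalDepths] at hj
  | node l r ihl ihr =>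
    obtain ⟨hl, hroot, hr⟩ := h
    simp only [internalDepths, List.length_append, List.length_map,
      List.length_singleton] at hj ⊢
    rcases lt_trichotomy j l.internalDepths.length with hjl | rfl | hjl
    · have := ihl hl j hjl
      rw [List.getElem_append_left (by simp; omega), List.getElem_append_left (by simpa using hjl),
        List.getElem_map, pow_succ]
      linarith
    · rw [List.getElem_append_left (by simp), List.getElem_append_right (by simp)]
      simpa using hroot
    · have := ihr hr (j - (l.internalDepths.length + 1)) (by omega)
      rw [List.getElem_append_right (by simp; omega), List.getElem_map, pow_succ]
      simp only [List.length_append, List.length_map, List.length_singleton]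
      rw [show lo + 2 * j + 1 = lo + 2 * l.internalDepths.length + 2
        + 2 * (j - (l.internalDepths.length + 1)) + 1 by omega]
      linarith

theorem exists_fitsWithin {w : ℕ → ℝ} (hw : ∀ u, 0 ≤ w u) (n : ℕ) :
    ∀ (lo : ℕ) (L : ℝ), weightMidpoint w (lo + 2 * n) - weightMidpoint w lo ≤ L →
      w lo ≤ 4 * L → ∃ T : BTree, T.internalDepths.length = n ∧ T.FitsWithin w lo L := by
  induction n using Nat.strong_induction_on with
  | _ n ih =>
  intro lo L hspread hlo
  rcases Nat.eq_zero_or_pos n with rfl | hn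
  · exact ⟨leaf, rfl, hlo⟩
  obtain ⟨k, hkn, hleft, hright⟩ := exists_balanced_root hw lo hn
  obtain ⟨l, hl_len, hl⟩ := ih k hkn lo (L / 2) (by linarith)
    (by linarith [(weight_le_two_mul_spread hw le_rfl (by omega : lo + 1 ≤ lo + 2 * n)).1])
  obtain ⟨r, hr_len, hr⟩ := ih (n - 1 - k) (by omega) (lo + 2 * k + 2) (L / 2)
    (by rw [show lo + 2 * k + 2 + 2 * (n - 1 - k) = lo + 2 * n by omega]; linarith)
    (by linarith [(weight_le_two_mul_spread hw (by omega : lo ≤ lo + 2 * k + 1)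
      (by omega : lo + 2 * k + 1 + 1 ≤ lo + 2 * n)).2])
  refine ⟨node l r, ?_, hl, ?_, ?_⟩
  · simp only [internalDepths, List.length_append, List.length_map, List.length_singleton,
      hl_len, hr_len]
    omega
  · rw [hl_len]
    linarith [(weight_le_two_mul_spread hw (by omega : lo ≤ lo + 2 * k + 1)
      (by omega : lo + 2 * k + 1 + 1 ≤ lo + 2 * n)).1]
  · rwa [hl_len]

end BTree

def interleave {M : Type*} (α β : ℕ → M) (u : ℕ) : M := if Even u then α (u / 2) else β (u / 2)

section Interleave

variable {M : Type*} {α β : ℕ → M}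

@[simp] lemma interleave_two_mul (i : ℕ) : interleave α β (2 * i) = α i := by
  simp [interleave]

@[simp] lemma interleave_two_mul_add_one (j : ℕ) : interleave α β (2 * j + 1) = β j := by
  simp [interleave, Nat.add_div_of_dvd_right]

lemma sum_range_interleave [AddCommMonoid M] (n : ℕ) :
    ∑ u ∈ range (2 * n + 1), interleave α β u = ∑ i ∈ range (n + 1), α i + ∑ j ∈ range n, β j := by
  induction n with
  | zero => simp [interleave]
  | succ n ih =>
    rw [show 2 * (n + 1) + 1 = 2 * n + 1 + 1 + 1 by ring, sum_range_succ, sum_range_succ, ih,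
      sum_range_succ α (n + 1), sum_range_succ β n, show 2 * n + 1 + 1 = 2 * (n + 1) by ring,
      interleave_two_mul, interleave_two_mul_add_one]
    abel

end Interleave

lemma extend_val_nonneg {M : Type*} [Zero M] [Preorder M] {n : ℕ} {f : Fin n → M}
    (hf : ∀ i, 0 ≤ f i) (u : ℕ) :
    0 ≤ Function.extend Fin.val f 0 u := by
  by_cases hu : ∃ i : Fin n, i.val = u
  · obtain ⟨i, rfl⟩ := hu
    rw [Fin.val_injective.extend_apply]
    exact hf i
  · rw [Function.extend_apply' _ _ _ hu]
    exact le_rfl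

lemma sum_range_extend_val {M : Type*} [AddCommMonoid M] {n : ℕ} (f : Fin n → M) :
    ∑ i ∈ range n, Function.extend Fin.val f 0 i = ∑ i, f i := by
  rw [← Fin.sum_univ_eq_sum_range]
  simp only [Fin.val_injective.extend_apply]

lemma mul_natCast_le_mul_logb_inv_add {x : ℝ} (hx : 0 ≤ x) {c d : ℕ}
    (h : x * 2 ^ d ≤ 2 ^ c) : x * d ≤ x * (Real.logb 2 x⁻¹ + c) := by
  rcases hx.eq_or_lt with rfl | hx
  · simp
  refine mul_le_mul_of_nonneg_left ?_ hx.le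
  have h2d : (2 : ℝ) ^ ((d : ℝ) - c) ≤ x⁻¹ := by
    rw [Real.rpow_sub two_pos, Real.rpow_natCast, Real.rpow_natCast, div_le_iff₀ (by positivity),
      inv_mul_eq_div, le_div_iff₀ hx, mul_comm]
    exact h
  linarith [(Real.le_logb_iff_rpow_le one_lt_two (inv_pos.mpr hx)).mpr h2d]

theorem exists_tree_weight_mul_two_pow_depth_le {m : ℕ} {β : Fin m → ℝ} {α : Fin (m + 1) → ℝ}
    (hβ : ∀ j, 0 ≤ β j) (hα : ∀ i, 0 ≤ α i) (hsum : (∑ j, β j) + (∑ i, α i) ≤ 1) :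
    ∃ T : BTree, T.internalDepths.length = m ∧
      (∀ (j : Fin m) (hj : (j : ℕ) < T.internalDepths.length),
        β j * 2 ^ T.internalDepths[(j : ℕ)] ≤ 2) ∧
      (∀ (i : Fin (m + 1)) (hi : (i : ℕ) < T.leafDepths.length),
        α i * 2 ^ T.leafDepths[(i : ℕ)] ≤ 4) := by
  set w := interleave (Function.extend Fin.val α 0) (Function.extend Fin.val β 0)
  have hw : ∀ u, 0 ≤ w u := fun u => by
    unfold w interleave
    split_ifs <;> exact extend_val_nonneg (by assumption) _
  have htotal : ∑ u ∈ range (2 * m + 1), w u ≤ 1 := by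
    rwa [sum_range_interleave, sum_range_extend_val, sum_range_extend_val, add_comm]
  have hspread : weightMidpoint w (0 + 2 * m) - weightMidpoint w 0 ≤ 1 := by
    simp only [weightMidpoint, zero_add, range_zero, sum_empty] at htotal ⊢
    rw [sum_range_succ] at htotal
    linarith [hw 0, hw (2 * m)]
  have hw0 : w 0 ≤ 4 * 1 := by
    linarith [single_le_sum (fun u _ => hw u) (mem_range.mpr (Nat.succ_pos (2 * m)))]
  obtain ⟨T, hT_int, hT⟩ := BTree.exists_fitsWithin hw m 0 1 hspread hw0
  refine ⟨T, hT_int, fun j hj => ?_, fun i hi => ?_⟩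
  · simpa [w, Fin.val_injective.extend_apply] using hT.internal_le j hj
  · simpa [w, Fin.val_injective.extend_apply] using hT.leaf_le i hi

theorem nearly_optimal_bst_method1
    (m : ℕ)
    (β : Fin m → ℝ) (α : Fin (m + 1) → ℝ)
    (hβ : ∀ j, 0 ≤ β j) (hα : ∀ i, 0 ≤ α i)
    (hsum : (∑ j, β j) + (∑ i, α i) = 1) :
    ∃ T : BTree,
      T.internalDepths.length = m ∧ T.leafDepths.length = m + 1 ∧
      (∑ j : Fin m, β j * ((T.internalDepths.getD j 0 : ℝ) + 1))
        + (∑ i : Fin (m + 1), α i * (T.leafDepths.getD i 0 : ℝ))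
      ≤ ((∑ j, β j * Real.logb 2 (β j)⁻¹) + (∑ i, α i * Real.logb 2 (α i)⁻¹)) + 2 := by
  obtain ⟨T, hT_int, hβT, hαT⟩ := exists_tree_weight_mul_two_pow_depth_le hβ hα hsum.le
  have hT_leaf : T.leafDepths.length = m + 1 := by rw [T.length_leafDepths, hT_int]
  refine ⟨T, hT_int, hT_leaf, ?_⟩
  have hint (j : Fin m) : β j * ((T.internalDepths.getD j 0 : ℝ) + 1)
      ≤ β j * (Real.logb 2 (β j)⁻¹ + 2) := by
    have hj : (j : ℕ) < T.internalDepths.length := by rw [hT_int]; exact j.isLt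
    rw [List.getD_eq_getElem _ _ hj]
    linarith [mul_natCast_le_mul_logb_inv_add (c := 1) (hβ j)
      ((hβT j hj).trans_eq (pow_one 2).symm)]
  have hleaf (i : Fin (m + 1)) : α i * (T.leafDepths.getD i 0 : ℝ)
      ≤ α i * (Real.logb 2 (α i)⁻¹ + 2) := by
    have hi : (i : ℕ) < T.leafDepths.length := by rw [hT_leaf]; exact i.isLt
    rw [List.getD_eq_getElem _ _ hi]
    exact_mod_cast mul_natCast_le_mul_logb_inv_add (c := 2) (hα i)
      ((hαT i hi).trans_eq (by norm_num))
  calc _ ≤ (∑ j, β j * (Real.logb 2 (β j)⁻¹ + 2)) + ∑ i, α i * (Real.logb 2 (α i)⁻¹ + 2) :=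
        add_le_add (sum_le_sum fun j _ => hint j) (sum_le_sum fun i _ => hleaf i)
    _ = (∑ j, β j * Real.logb 2 (β j)⁻¹) + (∑ i, α i * Real.logb 2 (α i)⁻¹)
          + 2 * ((∑ j, β j) + ∑ i, α i) := by
        simp only [mul_add, sum_add_distrib, ← sum_mul]
        ring
    _ = _ := by rw [hsum, mul_one]
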